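/- arXiv:2408.08871 — 2 statements merged into one kernel-verified Lean document; each statement's English description precedes it below -/
import Mathlib

section
/- Let (vᵢ) and (aᵢ) be sequences of positive reals with aᵢ → ∞ and vᵢ - (1/(6√π)) aᵢ^{3/2} → 0. Then for any fixed constants v₀ ≥ 0 and a₀ ≥ 0, the sequence (2/(aᵢ + a₀)) · |(vᵢ + v₀) - (1/(6√π))(aᵢ + a₀)^{3/2}| converges to 0. -/
open Real Filter

theorem quasilocal_mass_of_union_tendsto_zero
    (v a : ℕ → ℝ) (hv : ∀ i, 0 < v i) (ha : ∀ i, 0 < a i)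
    (ha' : Tendsto a atTop atTop)
    (hdef : Tendsto (fun i => v i - (1 / (6 * Real.sqrt π)) * (a i) ^ ((3 : ℝ) / 2))
      atTop (nhds 0))
    (v₀ a₀ : ℝ) (hv₀ : 0 ≤ v₀) (ha₀ : 0 ≤ a₀) :
    Tendsto (fun i => (2 / (a i + a₀)) *
        |(v i + v₀) - (1 / (6 * Real.sqrt π)) * (a i + a₀) ^ ((3 : ℝ) / 2)|)
      atTop (nhds 0) := by
  have hπ : 0 < Real.sqrt π := Real.sqrt_pos.2 Real.pi_pos
  set c : ℝ := 1 / (6 * Real.sqrt π) with hc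
  have hcpos : 0 < c := by positivity
  have hApos : ∀ i, 0 < a i + a₀ := fun i => by linarith [ha i]
  have hA : Tendsto (fun i => a i + a₀) atTop atTop :=
    tendsto_atTop_add_const_right _ _ ha'
  have hbound : ∀ i, (2 / (a i + a₀)) * |(v i + v₀) - c * (a i + a₀) ^ ((3:ℝ)/2)|
      ≤ (2 / (a i + a₀)) * (|v i - c * (a i) ^ ((3:ℝ)/2)| + v₀)
        + 6 * c * a₀ / Real.sqrt (a i + a₀) := by
    intro i
    set s := Real.sqrt (a i) with hs
    set t := Real.sqrt (a i + a₀) with ht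
    have hs0 : 0 ≤ s := Real.sqrt_nonneg _
    have ht0 : 0 < t := Real.sqrt_pos.2 (hApos i)
    have hs2 : s ^ 2 = a i := Real.sq_sqrt (ha i).le
    have ht2 : t ^ 2 = a i + a₀ := Real.sq_sqrt (hApos i).le
    have hst : s ≤ t := Real.sqrt_le_sqrt (by linarith)
    have hr1 : (a i) ^ ((3:ℝ)/2) = s ^ 3 := by
      rw [hs, Real.sqrt_eq_rpow, ← Real.rpow_natCast (a i ^ ((1:ℝ)/2)) 3,
        ← Real.rpow_mul (ha i).le]
      norm_num
    have hr2 : (a i + a₀) ^ ((3:ℝ)/2) = t ^ 3 := by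
      rw [ht, Real.sqrt_eq_rpow, ← Real.rpow_natCast ((a i + a₀) ^ ((1:ℝ)/2)) 3,
        ← Real.rpow_mul (hApos i).le]
      norm_num
    have hΔ : t ^ 3 - s ^ 3 ≤ 3 * a₀ * t := by
      nlinarith [mul_nonneg (sq_nonneg (t - s)) (by linarith : (0:ℝ) ≤ 2 * t + s)]
    have hΔ0 : 0 ≤ t ^ 3 - s ^ 3 := by nlinarith
    rw [hr1, hr2]
    have habs : |(v i + v₀) - c * t ^ 3|
        ≤ |v i - c * s ^ 3| + v₀ + c * (t ^ 3 - s ^ 3) := by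
      have h1 := le_abs_self (v i - c * s ^ 3)
      have h2 := neg_abs_le (v i - c * s ^ 3)
      have h3 : 0 ≤ c * (t ^ 3 - s ^ 3) := mul_nonneg hcpos.le hΔ0
      rw [abs_le]
      constructor <;> nlinarith
    have hfrac : (2 / (a i + a₀)) * (c * (t ^ 3 - s ^ 3)) ≤ 6 * c * a₀ / t := by
      rw [← ht2, div_mul_eq_mul_div, div_le_div_iff₀ (pow_pos ht0 2) ht0]
      nlinarith [mul_le_mul_of_nonneg_left hΔ (mul_nonneg (mul_nonneg (by norm_num : (0:ℝ) ≤ 2) hcpos.le) ht0.le)]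
    have hpos : (0:ℝ) < 2 / (a i + a₀) := div_pos two_pos (hApos i)
    calc (2 / (a i + a₀)) * |(v i + v₀) - c * t ^ 3|
        ≤ (2 / (a i + a₀)) * (|v i - c * s ^ 3| + v₀ + c * (t ^ 3 - s ^ 3)) :=
          mul_le_mul_of_nonneg_left habs hpos.le
      _ = (2 / (a i + a₀)) * (|v i - c * s ^ 3| + v₀)
            + (2 / (a i + a₀)) * (c * (t ^ 3 - s ^ 3)) := by ring
      _ ≤ _ := add_le_add_right hfrac _
  have h1 : Tendsto (fun i => 2 / (a i + a₀)) atTop (nhds 0) := by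
    simpa [div_eq_mul_inv] using (hA.inv_tendsto_atTop).const_mul (2:ℝ)
  have h2 : Tendsto (fun i => |v i - c * (a i) ^ ((3:ℝ)/2)| + v₀)
      atTop (nhds (0 + v₀)) := by
    exact Tendsto.add_const v₀ (by simpa using hdef.abs)
  have hsqrt : Tendsto (fun i => Real.sqrt (a i + a₀)) atTop atTop := by
    have h := (tendsto_rpow_atTop (by norm_num : (0:ℝ) < 1/2)).comp hA
    refine h.congr fun i => ?_
    rw [Function.comp_apply, Real.sqrt_eq_rpow]
  have h3 : Tendsto (fun i => 6 * c * a₀ / Real.sqrt (a i + a₀)) atTop (nhds 0) := by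
    simpa [div_eq_mul_inv] using (hsqrt.inv_tendsto_atTop).const_mul (6 * c * a₀)
  have hg := (h1.mul h2).add h3
  rw [show (0:ℝ) * (0 + v₀) + 0 = 0 by ring] at hg
  exact squeeze_zero (fun i => mul_nonneg (div_nonneg (by norm_num) (hApos i).le) (abs_nonneg _)) hbound hg
end

section
/- Let m ∈ ℝ, fix r₀ > max(|m|/2, 1), and define V(R) = 4π ∫_{r₀}^{R} (1 + m/(2r))⁶ r² dr and A(R) = 4πR²(1 + m/(2R))⁴ for R > r₀. Then lim_{R→∞} (2/A(R)) (V(R) - (1/(6√π)) A(R)^{3/2}) = m. -/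
open Real Filter

noncomputable def Fanti (m r : ℝ) : ℝ :=
  r ^ 3 / 3 + 3 * (m / 2) * r ^ 2 + 15 * (m / 2) ^ 2 * r + 20 * (m / 2) ^ 3 * Real.log r
    - 15 * (m / 2) ^ 4 / r - 3 * (m / 2) ^ 5 / r ^ 2 - (m / 2) ^ 6 / (3 * r ^ 3)

lemma Fanti_hasDerivAt (m r : ℝ) (hr : 0 < r) :
    HasDerivAt (Fanti m) ((1 + m / (2 * r)) ^ 6 * r ^ 2) r := by
  have h1 : HasDerivAt (fun x : ℝ => x ^ 3 / 3) ((3 : ℕ) * r ^ 2 / 3) r :=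
    (hasDerivAt_pow 3 r).div_const 3
  have h2 : HasDerivAt (fun x : ℝ => 3 * (m / 2) * x ^ 2) (3 * (m / 2) * ((2 : ℕ) * r ^ 1)) r :=
    (hasDerivAt_pow 2 r).const_mul _
  have h3 : HasDerivAt (fun x : ℝ => 15 * (m / 2) ^ 2 * x) (15 * (m / 2) ^ 2 * 1) r :=
    (hasDerivAt_id r).const_mul _
  have h4 : HasDerivAt (fun x : ℝ => 20 * (m / 2) ^ 3 * Real.log x)
      (20 * (m / 2) ^ 3 * r⁻¹) r :=
    (Real.hasDerivAt_log hr.ne').const_mul _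
  have h5 : HasDerivAt (fun x : ℝ => 15 * (m / 2) ^ 4 / x)
      ((0 * r - 15 * (m / 2) ^ 4 * 1) / r ^ 2) r :=
    (hasDerivAt_const r _).div (hasDerivAt_id r) hr.ne'
  have h6 : HasDerivAt (fun x : ℝ => 3 * (m / 2) ^ 5 / x ^ 2)
      ((0 * r ^ 2 - 3 * (m / 2) ^ 5 * ((2 : ℕ) * r ^ 1)) / (r ^ 2) ^ 2) r :=
    (hasDerivAt_const r _).div (hasDerivAt_pow 2 r) (pow_ne_zero _ hr.ne')
  have h7 : HasDerivAt (fun x : ℝ => (m / 2) ^ 6 / (3 * x ^ 3))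
      ((0 * (3 * r ^ 3) - (m / 2) ^ 6 * (3 * ((3 : ℕ) * r ^ 2))) / (3 * r ^ 3) ^ 2) r :=
    (hasDerivAt_const r _).div ((hasDerivAt_pow 3 r).const_mul 3) (by positivity)
  have h := (((((h1.add h2).add h3).add h4).sub h5).sub h6).sub h7
  refine HasDerivAt.congr_deriv (f := Fanti m) h ?_
  field_simp
  ring

lemma Fanti_integral (m r₀ R : ℝ) (h0 : 0 < r₀) (hR : r₀ < R) :
    (∫ r in r₀..R, (1 + m / (2 * r)) ^ 6 * r ^ 2) = Fanti m R - Fanti m r₀ := by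
  have hsub : Set.uIcc r₀ R ⊆ Set.Ioi (0 : ℝ) := by
    rw [Set.uIcc_of_le hR.le]
    intro x hx
    exact lt_of_lt_of_le h0 hx.1
  refine intervalIntegral.integral_eq_sub_of_hasDerivAt
    (fun x hx => Fanti_hasDerivAt m x (hsub hx)) ?_
  apply ContinuousOn.intervalIntegrable
  intro x hx
  have hx0 : x ≠ 0 := (hsub hx).out.ne'
  exact (((continuousAt_const.add (continuousAt_const.div
      (continuousAt_const.mul continuousAt_id) (by simpa using hx0))).pow 6).mul
      (continuousAt_id.pow 2)).continuousWithinAt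

set_option maxHeartbeats 1600000 in
theorem schwarzschild_isoperimetric_mass
    (m r₀ : ℝ) (hr₀ : r₀ > max (|m| / 2) 1)
    (V A : ℝ → ℝ)
    (hV : ∀ R, R > r₀ → V R = 4 * π * ∫ r in r₀..R, (1 + m / (2 * r)) ^ 6 * r ^ 2)
    (hA : ∀ R, R > r₀ → A R = 4 * π * R ^ 2 * (1 + m / (2 * R)) ^ 4) :
    Tendsto (fun R => (2 / A R) *
        (V R - (1 / (6 * Real.sqrt π)) * (A R) ^ ((3 : ℝ) / 2)))
      atTop (nhds m) := by
  obtain ⟨hm, h1⟩ := max_lt_iff.mp hr₀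
  have hr0 : 0 < r₀ := lt_trans one_pos h1
  have hinv : Tendsto (fun R : ℝ => R⁻¹) atTop (nhds 0) := tendsto_inv_atTop_zero
  have hlog : Tendsto (fun R : ℝ => Real.log R * R⁻¹) atTop (nhds 0) := by
    simpa [div_eq_mul_inv] using Real.isLittleO_log_id_atTop.tendsto_div_nhds_zero
  have hQ : Tendsto (fun R : ℝ => (1 + m / (2 * R)) ^ 4) atTop (nhds 1) := by
    have h2 : Tendsto (fun R : ℝ => m / (2 * R)) atTop (nhds 0) := by
      have := tendsto_inv_atTop_zero.const_mul (m / 2)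
      simpa [div_eq_mul_inv, mul_inv, mul_comm, mul_assoc, mul_left_comm] using this
    have h3 : Tendsto (fun R : ℝ => 1 + m / (2 * R)) atTop (nhds 1) := by
      simpa using tendsto_const_nhds.add h2
    simpa using h3.pow 4
  have hPt : Tendsto (fun R : ℝ => m + 20 * (m / 2) ^ 2 * R⁻¹
      + 40 * (m / 2) ^ 3 * (Real.log R * R⁻¹ * R⁻¹)
      + (-40 * (m / 2) ^ 3 / 3 - 2 * Fanti m r₀) * (R⁻¹ * R⁻¹)
      - 40 * (m / 2) ^ 4 * (R⁻¹) ^ 3 - 10 * (m / 2) ^ 5 * (R⁻¹) ^ 4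
      - 4 * (m / 2) ^ 6 / 3 * (R⁻¹) ^ 5) atTop (nhds m) := by
    have t1 := hinv.const_mul (20 * (m / 2) ^ 2)
    have t2 := (hlog.mul hinv).const_mul (40 * (m / 2) ^ 3)
    have t3 := (hinv.mul hinv).const_mul (-40 * (m / 2) ^ 3 / 3 - 2 * Fanti m r₀)
    have t4 := ((hinv.pow 3)).const_mul (40 * (m / 2) ^ 4)
    have t5 := ((hinv.pow 4)).const_mul (10 * (m / 2) ^ 5)
    have t6 := ((hinv.pow 5)).const_mul (4 * (m / 2) ^ 6 / 3)
    have h := ((((((tendsto_const_nhds (x := m) (f := atTop)).add t1).add t2).add t3).sub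
      t4).sub t5).sub t6
    simpa [mul_assoc] using h
  have hfinal := hPt.div hQ one_ne_zero
  rw [div_one] at hfinal
  refine Tendsto.congr' ?_ hfinal
  filter_upwards [eventually_gt_atTop r₀] with R hR
  have hRpos : 0 < R := lt_trans hr0 hR
  have hu : 0 < 1 + m / (2 * R) := by
    have habs : |m| < 2 * R := by
      calc |m| = 2 * (|m| / 2) := by ring
        _ < 2 * r₀ := by linarith
        _ < 2 * R := by linarith
    have h2 : |m / (2 * R)| < 1 := by
      rw [abs_div, abs_of_pos (by linarith : (0:ℝ) < 2 * R)]
      exact (div_lt_one (by linarith)).mpr habs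
    have := neg_lt_of_abs_lt h2
    linarith [this]
  have hsq : Real.sqrt π ^ 2 = π := Real.sq_sqrt pi_pos.le
  have hsπ : (0:ℝ) < Real.sqrt π := Real.sqrt_pos.mpr pi_pos
  have hypos : 0 < 2 * Real.sqrt π * R * (1 + m / (2 * R)) ^ 2 := by positivity
  have hAy : A R = (2 * Real.sqrt π * R * (1 + m / (2 * R)) ^ 2) ^ 2 := by
    rw [hA R hR]
    have h : (2 * Real.sqrt π * R * (1 + m / (2 * R)) ^ 2) ^ 2
        = 4 * (Real.sqrt π ^ 2) * R ^ 2 * (1 + m / (2 * R)) ^ 4 := by ring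
    rw [h, hsq]
  have hrpow : (A R) ^ ((3 : ℝ) / 2) = (2 * Real.sqrt π * R * (1 + m / (2 * R)) ^ 2) ^ 3 := by
    rw [hAy, ← Real.rpow_natCast (2 * Real.sqrt π * R * (1 + m / (2 * R)) ^ 2) 2,
      ← Real.rpow_mul hypos.le]
    rw [show ((2:ℕ):ℝ) * ((3:ℝ)/2) = ((3:ℕ):ℝ) by norm_num, Real.rpow_natCast]
  have hterm : 1 / (6 * Real.sqrt π) * (A R) ^ ((3 : ℝ) / 2)
      = 4 * π / 3 * R ^ 3 * (1 + m / (2 * R)) ^ 6 := by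
    rw [hrpow]
    have h : (2 * Real.sqrt π * R * (1 + m / (2 * R)) ^ 2) ^ 3
        = 8 * (Real.sqrt π ^ 2) * Real.sqrt π * R ^ 3 * (1 + m / (2 * R)) ^ 6 := by ring
    rw [h, hsq]
    field_simp
    ring
  simp only [Pi.div_apply]
  rw [hV R hR, Fanti_integral m r₀ R hr0 hR, hterm, hA R hR]
  simp only [Fanti]
  have hu4 : ((1 + m / (2 * R)) ^ 4 : ℝ) ≠ 0 := pow_ne_zero _ hu.ne'
  have hD : (0:ℝ) < 4 * π * R ^ 2 * (1 + m / (2 * R)) ^ 4 :=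
    mul_pos (mul_pos (mul_pos (by norm_num : (0:ℝ) < 4) pi_pos) (pow_pos hRpos 2))
      (pow_pos hu 4)
  conv_rhs => rw [div_mul_eq_mul_div]
  rw [div_eq_div_iff hu4 hD.ne']
  field_simp
  ring
end
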